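/- For the complete graph K_n on n vertices, the number of equivalence classes of acyclic orientations under source-to-sink operations equals (n−1)!; that is, κ(K_n) = (n−1)!. -/

import Mathlib

/-- An orientation of a simple graph `Y`. -/
structure Orient {n : ℕ} (Y : SimpleGraph (Fin n)) where
  dir : Fin n → Fin n → Prop
  dir_adj : ∀ i j, dir i j → Y.Adj i j
  dir_iff : ∀ i j, Y.Adj i j → (dir i j ↔ ¬ dir j i)

/-- An orientation is acyclic if it induces no directed cycle. -/
def IsAcyc {n : ℕ} {Y : SimpleGraph (Fin n)} (o : Orient Y) : Prop :=
  ∀ v, ¬ Relation.TransGen o.dir v v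

/-- A source of an orientation: a vertex with no incoming edges. -/
def IsSource {n : ℕ} {Y : SimpleGraph (Fin n)} (o : Orient Y) (v : Fin n) : Prop :=
  ∀ j, ¬ o.dir j v

/-- The source-to-sink (click) relation: `o'` is obtained from `o` by choosing a
source `v` of `o` and reversing all edges incident to `v`. -/
def ClickRel {n : ℕ} {Y : SimpleGraph (Fin n)} (o o' : Orient Y) : Prop :=
  ∃ v, IsSource o v ∧
    ∀ i j, o'.dir i j ↔ (if i = v ∨ j = v then o.dir j i else o.dir i j)

/-! Ranking each vertex by its in-degree identifies acyclic orientations of `K_n` with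
permutations `σ : Fin n ≃ Fin n`. The source has rank `0` and clicking it makes it the sink, so a
click acts on ranks as `σ ↦ σ - 1` in the cyclic group `Fin n`. The click classes are therefore
the orbits of the rotations `σ ↦ σ + c`; each contains exactly one `σ` with `σ 0 = 0`, and those
are counted by `(n - 1)!`. -/

open Equiv

theorem Nat.card_perm_apply_eq_self {α : Type*} [Finite α] [DecidableEq α] (a : α) :
    Nat.card {σ : Perm α // σ a = a} = Nat.factorial (Nat.card α - 1) := by
  have := Fintype.ofFinite α
  rw [← Nat.card_congr ((Perm.subtypeEquivSubtypePerm (· ≠ a)).trans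
    (Equiv.subtypeEquivRight (fun σ => by simp))), Nat.card_perm]
  simp only [Nat.card_eq_fintype_card, ne_eq, Fintype.card_subtype_compl, Fintype.card_subtype_eq]

lemma Fin.sub_one_lt_sub_one_iff {n : ℕ} [NeZero n] (x y : Fin n) :
    x - 1 < y - 1 ↔ if x = 0 ∨ y = 0 then y < x else x < y := by
  obtain ⟨m, rfl⟩ := Nat.exists_eq_succ_of_ne_zero (NeZero.ne n)
  have hx := x.is_le
  have hy := y.is_le
  simp only [Fin.lt_def, Fin.coe_sub_one, Fin.ext_iff, Fin.val_zero]
  split_ifs <;> omega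

attribute [ext] Orient

namespace Orient

variable {n : ℕ}

lemma not_dir_self {Y : SimpleGraph (Fin n)} (o : Orient Y) (v : Fin n) : ¬ o.dir v v :=
  fun h => (o.dir_adj v v h).ne rfl

lemma dir_asymm {Y : SimpleGraph (Fin n)} (o : Orient Y) {i j : Fin n} (h : o.dir i j) :
    ¬ o.dir j i :=
  (o.dir_iff i j (o.dir_adj i j h)).mp h

variable (o : Orient (⊤ : SimpleGraph (Fin n)))

lemma dir_or_dir {i j : Fin n} (hij : i ≠ j) : o.dir i j ∨ o.dir j i :=
  or_iff_not_imp_right.mpr (o.dir_iff i j hij).mpr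

variable {o}

lemma dir_trans (ha : IsAcyc o) {i j k : Fin n} (hij : o.dir i j) (hjk : o.dir j k) :
    o.dir i k := by
  have hik : i ≠ k := by rintro rfl; exact o.dir_asymm hij hjk
  refine (o.dir_or_dir hik).resolve_right fun hki => ha i ?_
  exact .head hij (.head hjk (.single hki))

noncomputable def indeg (o : Orient (⊤ : SimpleGraph (Fin n))) (v : Fin n) : ℕ :=
  {j | o.dir j v}.ncard

lemma indeg_lt (v : Fin n) : o.indeg v < n := by
  have h : {j | o.dir j v} ⊂ Set.univ := Set.ssubset_univ_iff.mpr fun h =>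
    o.not_dir_self v (h.symm ▸ Set.mem_univ v : v ∈ {j | o.dir j v})
  simpa [indeg, Set.ncard_univ] using Set.ncard_lt_ncard h

lemma indeg_lt_indeg (ha : IsAcyc o) {i j : Fin n} (h : o.dir i j) : o.indeg i < o.indeg j :=
  Set.ncard_lt_ncard ⟨fun _ hk => dir_trans ha hk h, fun hsub => o.not_dir_self i (hsub h)⟩

lemma dir_iff_indeg_lt (ha : IsAcyc o) (i j : Fin n) : o.dir i j ↔ o.indeg i < o.indeg j := by
  refine ⟨indeg_lt_indeg ha, fun h => ?_⟩
  have hij : i ≠ j := by rintro rfl; exact lt_irrefl _ h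
  exact (o.dir_or_dir hij).resolve_right fun hji => (indeg_lt_indeg ha hji).not_gt h

lemma indeg_injective (ha : IsAcyc o) : Function.Injective o.indeg := by
  intro i j hij
  by_contra hne
  rcases o.dir_or_dir hne with h | h
  · exact (indeg_lt_indeg ha h).ne hij
  · exact (indeg_lt_indeg ha h).ne hij.symm

lemma isSource_iff_indeg_eq_zero (o : Orient (⊤ : SimpleGraph (Fin n))) (v : Fin n) :
    IsSource o v ↔ o.indeg v = 0 := by
  rw [indeg, Set.ncard_eq_zero, Set.eq_empty_iff_forall_notMem]
  rfl

def ofPerm (σ : Perm (Fin n)) : Orient (⊤ : SimpleGraph (Fin n)) where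
  dir i j := σ i < σ j
  dir_adj i j h := by rintro rfl; exact lt_irrefl _ h
  dir_iff i j h := ⟨lt_asymm, fun h' => (le_of_not_gt h').lt_of_ne (σ.injective.ne h)⟩

lemma isAcyc_ofPerm (σ : Perm (Fin n)) : IsAcyc (ofPerm σ) := fun v hv => by
  have h := hv.lift σ (p := (· < ·)) fun _ _ h => h
  rw [Relation.transGen_eq_self] at h
  exact lt_irrefl _ h

lemma indeg_ofPerm (σ : Perm (Fin n)) (v : Fin n) : (ofPerm σ).indeg v = σ v := by
  have : {j | σ j < σ v} = σ.symm '' Set.Iio (σ v) := by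
    ext j
    simp [Equiv.image_eq_preimage_symm]
  rw [indeg, show (ofPerm σ).dir = fun i j => σ i < σ j from rfl, this,
    Set.ncard_image_of_injective _ σ.symm.injective, ← Finset.coe_Iio, Set.ncard_coe_finset,
    Fin.card_Iio]

end Orient

open Orient

variable {n : ℕ}

/-- The rank of a vertex is its in-degree. -/
noncomputable def acyclicEquivPerm :
    {o : Orient (⊤ : SimpleGraph (Fin n)) // IsAcyc o} ≃ Perm (Fin n) where
  toFun a := .ofBijective (fun v => ⟨a.1.indeg v, indeg_lt v⟩) <| Finite.injective_iff_bijective.mp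
    fun _ _ h => indeg_injective a.2 (Fin.mk.inj h)
  invFun σ := ⟨ofPerm σ, isAcyc_ofPerm σ⟩
  left_inv a := by
    ext i j
    exact (dir_iff_indeg_lt a.2 i j).symm
  right_inv σ := by
    ext v
    exact indeg_ofPerm σ v

lemma dir_iff_acyclicEquivPerm_lt (a : {o : Orient (⊤ : SimpleGraph (Fin n)) // IsAcyc o})
    (i j : Fin n) : a.1.dir i j ↔ acyclicEquivPerm a i < acyclicEquivPerm a j :=
  dir_iff_indeg_lt a.2 i j

lemma perm_eq_of_lt_iff_lt {σ τ : Perm (Fin n)} (h : ∀ i j, σ i < σ j ↔ τ i < τ j) : σ = τ :=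
  acyclicEquivPerm.symm.injective <| Subtype.ext <| Orient.ext <| funext₂ fun i j => propext (h i j)

section Click

open Fin.NatCast

variable [NeZero n]

lemma isSource_iff (a : {o : Orient (⊤ : SimpleGraph (Fin n)) // IsAcyc o}) (v : Fin n) :
    IsSource a.1 v ↔ acyclicEquivPerm a v = 0 := by
  rw [isSource_iff_indeg_eq_zero, Fin.ext_iff, Fin.val_zero]
  rfl

/-- The ranks after clicking the source: it moves from rank `0` to the top rank `n - 1`, and every
other vertex moves down by one. -/
def clickPerm (σ : Perm (Fin n)) : Perm (Fin n) :=
  σ.trans (Equiv.subRight 1)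

lemma clickPerm_lt_iff {σ : Perm (Fin n)} {v : Fin n} (hv : σ v = 0) (i j : Fin n) :
    clickPerm σ i < clickPerm σ j ↔ if i = v ∨ j = v then σ j < σ i else σ i < σ j := by
  have hz : ∀ w, σ w = 0 ↔ w = v := fun w => by rw [← hv, σ.injective.eq_iff]
  simp only [clickPerm, trans_apply, Equiv.subRight_apply, Fin.sub_one_lt_sub_one_iff, hz]

lemma clickRel_iff (a b : {o : Orient (⊤ : SimpleGraph (Fin n)) // IsAcyc o}) :
    ClickRel a.1 b.1 ↔ acyclicEquivPerm b = clickPerm (acyclicEquivPerm a) := by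
  simp only [ClickRel, isSource_iff, dir_iff_acyclicEquivPerm_lt]
  constructor
  · rintro ⟨v, hv, hd⟩
    exact perm_eq_of_lt_iff_lt fun i j => (hd i j).trans (clickPerm_lt_iff hv i j).symm
  · intro h
    have h0 := apply_symm_apply (acyclicEquivPerm a) 0
    exact ⟨_, h0, fun i j => by rw [h, clickPerm_lt_iff h0]⟩

/-- The representative of the rotation class of `σ` that sends `0` to `0`. -/
def normalizeAtZero (σ : Perm (Fin n)) : {τ : Perm (Fin n) // τ 0 = 0} :=
  ⟨σ.trans (Equiv.subRight (σ 0)), sub_self _⟩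

lemma normalizeAtZero_clickPerm (σ : Perm (Fin n)) :
    normalizeAtZero (clickPerm σ) = normalizeAtZero σ := by
  ext x
  simp [normalizeAtZero, clickPerm]

lemma normalizeAtZero_surjective : Function.Surjective (normalizeAtZero (n := n)) := fun τ =>
  ⟨τ, Subtype.ext <| Equiv.ext fun x => by simp [normalizeAtZero, τ.2]⟩

lemma eq_trans_addRight_of_normalizeAtZero_eq {σ τ : Perm (Fin n)}
    (h : normalizeAtZero σ = normalizeAtZero τ) : τ = σ.trans (Equiv.addRight (τ 0 - σ 0)) := by
  refine Equiv.ext fun x => ?_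
  have hx := congrArg (fun ρ : {ρ : Perm (Fin n) // ρ 0 = 0} => ρ.1 x) h
  simp only [normalizeAtZero, trans_apply, Equiv.subRight_apply] at hx
  rw [trans_apply, Equiv.coe_addRight]
  grind

lemma eqvGen_clickRel_of_eq_trans_addRight (k : ℕ)
    (a b : {o : Orient (⊤ : SimpleGraph (Fin n)) // IsAcyc o})
    (h : acyclicEquivPerm b = (acyclicEquivPerm a).trans (Equiv.addRight (k : Fin n))) :
    Relation.EqvGen (fun a b => ClickRel a.1 b.1) a b := by
  induction k generalizing b with
  | zero =>
    obtain rfl : b = a := acyclicEquivPerm.injective (h.trans (Equiv.ext fun _ => by simp))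
    exact .refl b
  | succ k ih =>
    set c := acyclicEquivPerm.symm ((acyclicEquivPerm a).trans (Equiv.addRight (k : Fin n)))
    have hbc : ClickRel b.1 c.1 := by
      rw [clickRel_iff, h]
      ext x
      simp [c, clickPerm]
    -- `b` is reached from `c` by a reverse click, which raises every rank by one
    exact (ih c (by simp [c])).trans _ _ _ (.symm _ _ (.rel _ _ hbc))

lemma eqvGen_clickRel_eq_ker :
    Relation.EqvGen.setoid (fun a b : {o : Orient (⊤ : SimpleGraph (Fin n)) // IsAcyc o} =>
      ClickRel a.1 b.1) = Setoid.ker (normalizeAtZero ∘ acyclicEquivPerm) := by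
  refine le_antisymm (Setoid.eqvGen_le fun a b h => ?_) fun a b h => ?_
  · rw [Setoid.ker_def, Function.comp_apply, Function.comp_apply, (clickRel_iff a b).mp h,
      normalizeAtZero_clickPerm]
  · exact eqvGen_clickRel_of_eq_trans_addRight _ a b <| by
      rw [Fin.cast_val_eq_self]
      exact eq_trans_addRight_of_normalizeAtZero_eq h

end Click

/-- For the complete graph on `n ≥ 1` vertices, the number of equivalence classes
of acyclic orientations under source-to-sink operations is `(n-1)!`. -/
theorem stmt5 {n : ℕ} (hn : 1 ≤ n) :
    Nat.card (Quotient (Relation.EqvGen.setoid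
      (fun a b : {o : Orient (⊤ : SimpleGraph (Fin n)) // IsAcyc o} =>
        ClickRel a.1 b.1))) = Nat.factorial (n - 1) := by
  have : NeZero n := ⟨by omega⟩
  rw [eqvGen_clickRel_eq_ker, Nat.card_congr (Setoid.quotientKerEquivOfSurjective _
    (normalizeAtZero_surjective.comp acyclicEquivPerm.surjective)),
    Nat.card_perm_apply_eq_self, Nat.card_fin]
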